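/- arXiv:1906.11382 — 2 statements merged into one kernel-verified Lean document; each statement's English description precedes it below -/
import Mathlib

section
/- (Polyhedral lemma, decomposition part) Let y ∈ ℝⁿ, A ∈ ℝ^{m×n}, b ∈ ℝ^m, and let η ∈ ℝⁿ with η ≠ 0. Let Σ be a positive definite n×n matrix, c = Ση(ηᵀΣη)⁻¹, and z = (Iₙ − cηᵀ)y. Then the set {y : Ay ≤ b} equals {y : L(z) ≤ ηᵀy ≤ U(z), N(z) ≥ 0}, where L(z) = max over j with (Ac)_j < 0 of (b_j − (Az)_j)/(Ac)_j, U(z) = min over j with (Ac)_j > 0 of (b_j − (Az)_j)/(Ac)_j, and N(z) = min over j with (Ac)_j = 0 of (b_j − (Az)_j). -/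
open Matrix

/-- **Polyhedral lemma, decomposition part.** With `c = Ση (ηᵀΣη)⁻¹` and
`z = (I − cηᵀ) y`, the polyhedron `{y : Ay ≤ b}` coincides with
`{y : L(z) ≤ ηᵀy ≤ U(z), N(z) ≥ 0}`, where `L(z)` is the max of
`(b_j − (Az)_j)/(Ac)_j` over `j` with `(Ac)_j < 0` (as an `EReal`, `−∞` if empty),
`U(z)` the min over `j` with `(Ac)_j > 0` (`+∞` if empty), and `N(z)` the min of
`b_j − (Az)_j` over `j` with `(Ac)_j = 0`. -/
theorem polyhedral_lemma_decomposition
    {n m : ℕ} (A : Matrix (Fin m) (Fin n) ℝ) (b : Fin m → ℝ)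
    (η : Fin n → ℝ) (hη : η ≠ 0)
    (S : Matrix (Fin n) (Fin n) ℝ) (hS : S.PosDef)
    (c : Fin n → ℝ) (hc : c = (η ⬝ᵥ S *ᵥ η)⁻¹ • (S *ᵥ η))
    (z : (Fin n → ℝ) → Fin n → ℝ)
    (hz : ∀ y, z y = (1 - vecMulVec c η) *ᵥ y)
    (Lz Uz Nz : (Fin n → ℝ) → EReal)
    (hL : ∀ y, Lz y = ⨆ j : {j : Fin m // (A *ᵥ c) j < 0},
      (((b j.1 - (A *ᵥ z y) j.1) / (A *ᵥ c) j.1 : ℝ) : EReal))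
    (hU : ∀ y, Uz y = ⨅ j : {j : Fin m // 0 < (A *ᵥ c) j},
      (((b j.1 - (A *ᵥ z y) j.1) / (A *ᵥ c) j.1 : ℝ) : EReal))
    (hN : ∀ y, Nz y = ⨅ j : {j : Fin m // (A *ᵥ c) j = 0},
      (((b j.1 - (A *ᵥ z y) j.1) : ℝ) : EReal)) :
    {y : Fin n → ℝ | A *ᵥ y ≤ b}
      = {y : Fin n → ℝ | Lz y ≤ ((η ⬝ᵥ y : ℝ) : EReal) ∧ ((η ⬝ᵥ y : ℝ) : EReal) ≤ Uz y
          ∧ 0 ≤ Nz y} := by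
  have hSpos : 0 < η ⬝ᵥ S *ᵥ η := by
    have := hS.dotProduct_mulVec_pos hη
    simpa using this
  have hηc : η ⬝ᵥ c = 1 := by
    rw [hc, dotProduct_smul, smul_eq_mul, inv_mul_cancel₀ (ne_of_gt hSpos)]
  have key : ∀ y j, (A *ᵥ y) j = (A *ᵥ z y) j + (η ⬝ᵥ y) * (A *ᵥ c) j := by
    intro y j
    have hzy : z y = y - (η ⬝ᵥ y) • c := by
      rw [hz]
      have hv : vecMulVec c η *ᵥ y = (η ⬝ᵥ y) • c := by
        funext i
        simp only [Matrix.mulVec, Matrix.vecMulVec_apply, dotProduct, Pi.smul_apply,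
          smul_eq_mul, Finset.sum_mul]
        exact Finset.sum_congr rfl fun x _ => by ring
      rw [Matrix.sub_mulVec, Matrix.one_mulVec, hv]
    rw [hzy, Matrix.mulVec_sub, Matrix.mulVec_smul]
    simp only [Pi.sub_apply, Pi.smul_apply, smul_eq_mul]
    ring
  ext y
  simp only [Set.mem_setOf_eq]
  set t : ℝ := η ⬝ᵥ y with ht
  constructor
  · intro h
    refine ⟨?_, ?_, ?_⟩
    · rw [hL]
      apply iSup_le
      rintro ⟨j, hj⟩
      rw [EReal.coe_le_coe_iff]
      rw [div_le_iff_of_neg hj]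
      have := h j
      rw [key y j] at this
      linarith
    · rw [hU]
      apply le_iInf
      rintro ⟨j, hj⟩
      rw [EReal.coe_le_coe_iff]
      rw [le_div_iff₀ hj]
      have := h j
      rw [key y j] at this
      linarith
    · rw [hN]
      apply le_iInf
      rintro ⟨j, hj⟩
      have := h j
      rw [key y j, hj, mul_zero, add_zero] at this
      exact EReal.coe_nonneg.mpr (by linarith)
  · rintro ⟨h1, h2, h3⟩
    intro j
    rw [key y j]
    rcases lt_trichotomy ((A *ᵥ c) j) 0 with hj | hj | hj
    · rw [hL] at h1
      have := le_trans (le_iSup _ (⟨j, hj⟩ : {j : Fin m // (A *ᵥ c) j < 0})) h1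
      rw [EReal.coe_le_coe_iff, div_le_iff_of_neg hj] at this
      linarith
    · rw [hN] at h3
      have := le_trans h3 (iInf_le _ (⟨j, hj⟩ : {j : Fin m // (A *ᵥ c) j = 0}))
      have h0 : (0 : ℝ) ≤ b j - (A *ᵥ z y) j := EReal.coe_nonneg.mp this
      rw [hj, mul_zero]
      linarith
    · rw [hU] at h2
      have := le_trans h2 (iInf_le _ (⟨j, hj⟩ : {j : Fin m // 0 < (A *ᵥ c) j}))
      rw [EReal.coe_le_coe_iff, le_div_iff₀ hj] at this
      linarith
end

section
/- (Polyhedral lemma, independence part) Suppose y ∼ N(μ, Σ) with Σ positive definite, η ∈ ℝⁿ nonzero, c = Ση(ηᵀΣη)⁻¹, and z = (Iₙ − cηᵀ)y. Then the Gaussian random variables ηᵀy and z are independent. -/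
open Matrix MeasureTheory ProbabilityTheory

open scoped ENNReal Real

section Aux

/-- Tonelli for a product of one-variable functions over a finite product measure. -/
lemma polyAux_lintegral_pi_prod :
    ∀ (k : ℕ) (μ : Fin k → Measure ℝ), (∀ i, SigmaFinite (μ i)) →
    ∀ (f : Fin k → ℝ → ℝ≥0∞), (∀ i, Measurable (f i)) →
    ∫⁻ x, ∏ i, f i (x i) ∂Measure.pi μ = ∏ i, ∫⁻ t, f i t ∂μ i := by
  intro k
  induction k with
  | zero =>
      intro μ hμ f hf
      haveI := hμ
      simp [Measure.pi_univ]
  | succ m ih =>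
      intro μ hμ f hf
      haveI := hμ
      have hmp := measurePreserving_piFinSuccAbove μ 0
      set F' : ℝ × (Fin m → ℝ) → ℝ≥0∞ :=
        fun p => f 0 p.1 * ∏ i, f (Fin.succ i) (p.2 i) with hF'def
      have hprodmeas : Measurable fun z : Fin m → ℝ => ∏ i, f (Fin.succ i) (z i) :=
        Finset.measurable_prod _ fun i _ => (hf _).comp (measurable_pi_apply i)
      have hF' : Measurable F' :=
        ((hf 0).comp measurable_fst).mul (hprodmeas.comp measurable_snd)
      have e1 : ∀ x : Fin (m + 1) → ℝ,
          (∏ i, f i (x i)) = F' ((MeasurableEquiv.piFinSuccAbove (fun _ => ℝ) 0) x) := by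
        intro x
        rw [Fin.prod_univ_succ]
        simp [hF'def, MeasurableEquiv.piFinSuccAbove, Fin.removeNth, Fin.succAbove_zero,
          Fin.tail]
      calc ∫⁻ x, ∏ i, f i (x i) ∂Measure.pi μ
          = ∫⁻ x, F' ((MeasurableEquiv.piFinSuccAbove (fun _ => ℝ) 0) x) ∂Measure.pi μ :=
            lintegral_congr e1
        _ = ∫⁻ p, F' p ∂((μ 0).prod (Measure.pi fun j => μ (Fin.succAbove 0 j))) :=
            hmp.lintegral_comp hF'
        _ = ∫⁻ p, F' p ∂((μ 0).prod (Measure.pi fun j => μ (Fin.succ j))) := by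
            simp [Fin.succAbove_zero]
        _ = ∫⁻ y, ∫⁻ z, F' (y, z) ∂(Measure.pi fun j => μ (Fin.succ j)) ∂μ 0 :=
            lintegral_prod _ hF'.aemeasurable
        _ = ∫⁻ y, f 0 y * ∏ i, ∫⁻ t, f (Fin.succ i) t ∂μ (Fin.succ i) ∂μ 0 := by
            refine lintegral_congr fun y => ?_
            rw [hF'def]
            simp only
            rw [lintegral_const_mul _ hprodmeas,
              ih (fun j => μ (Fin.succ j)) (fun j => hμ _) (fun j => f (Fin.succ j))
                (fun j => hf _)]
        _ = (∫⁻ t, f 0 t ∂μ 0) * ∏ i, ∫⁻ t, f (Fin.succ i) t ∂μ (Fin.succ i) :=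
            lintegral_mul_const _ (hf 0)
        _ = ∏ i, ∫⁻ t, f i t ∂μ i := by rw [Fin.prod_univ_succ]

lemma polyAux_map_withDensity {α β : Type*} [MeasurableSpace α] [MeasurableSpace β]
    (T : α → β) (hT : Measurable T) (μ : Measure α) (f : β → ℝ≥0∞) (hf : Measurable f) :
    Measure.map T (μ.withDensity (f ∘ T)) = (Measure.map T μ).withDensity f := by
  ext s hs
  rw [Measure.map_apply hT hs, withDensity_apply _ (hT hs), withDensity_apply _ hs,
    setLIntegral_map hs hf hT]
  rfl

/-- The standard Gaussian product measure on `Fin k → ℝ` as a density against Lebesgue. -/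
lemma polyAux_pi_gaussian_eq (k : ℕ) :
    Measure.pi (fun _ : Fin k => gaussianReal 0 1)
      = (volume : Measure (Fin k → ℝ)).withDensity
          (fun x => ∏ i, gaussianPDF 0 1 (x i)) := by
  classical
  refine Measure.pi_eq fun s hs => ?_
  have hind : ∀ x, (Set.pi Set.univ s).indicator (fun x => ∏ i, gaussianPDF 0 1 (x i)) x
      = ∏ i, (s i).indicator (gaussianPDF 0 1) (x i) := by
    intro x
    by_cases hx : x ∈ Set.pi Set.univ s
    · rw [Set.indicator_of_mem hx]
      exact Finset.prod_congr rfl fun i _ =>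
        (Set.indicator_of_mem (hx i (Set.mem_univ i)) _).symm
    · rw [Set.indicator_of_notMem hx]
      obtain ⟨i, hi⟩ : ∃ i, x i ∉ s i := by
        by_contra hcon
        push_neg at hcon
        exact hx fun i _ => hcon i
      exact (Finset.prod_eq_zero (Finset.mem_univ i) (Set.indicator_of_notMem hi _)).symm
  rw [withDensity_apply _ (MeasurableSet.univ_pi hs),
    ← lintegral_indicator (MeasurableSet.univ_pi hs), lintegral_congr hind]
  have hvp : (volume : Measure (Fin k → ℝ)) = Measure.pi fun _ => volume := by
    rw [volume_pi]
  rw [hvp, polyAux_lintegral_pi_prod k _ (fun _ => inferInstance) _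
    (fun i => (measurable_gaussianPDF 0 1).indicator (hs i))]
  refine Finset.prod_congr rfl fun i _ => ?_
  rw [lintegral_indicator (hs i), ← gaussianReal_apply 0 one_ne_zero (s i)]

/-- Rotation invariance of the standard Gaussian product measure. -/
lemma polyAux_map_mulVec_pi_gaussian {k : ℕ} (O : Matrix (Fin k) (Fin k) ℝ)
    (hO : O * Oᵀ = 1) :
    Measure.map (fun x => O *ᵥ x) (Measure.pi fun _ : Fin k => gaussianReal 0 1)
      = Measure.pi fun _ : Fin k => gaussianReal 0 1 := by
  classical
  have hOTO : Oᵀ * O = 1 := mul_eq_one_comm.mp hO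
  set T : (Fin k → ℝ) → (Fin k → ℝ) := fun x => O *ᵥ x with hTdef
  have hT : Measurable T := by
    have hTalt : T = fun x => fun i => ∑ j, O i j * x j := by
      funext x i
      simp [hTdef, Matrix.mulVec, dotProduct]
    rw [hTalt]
    exact measurable_pi_lambda _ fun i =>
      Finset.measurable_sum _ fun j _ => (measurable_pi_apply j).const_mul _
  set F : (Fin k → ℝ) → ℝ≥0∞ := fun x => ∏ i, gaussianPDF 0 1 (x i) with hFdef
  have hFmeas : Measurable F :=
    Finset.measurable_prod _ fun i _ =>
      (measurable_gaussianPDF 0 1).comp (measurable_pi_apply i)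
  have key : ∀ w : Fin k → ℝ,
      F w = ENNReal.ofReal ((Real.sqrt (2 * π))⁻¹ ^ k
        * Real.exp (-(∑ i, (w i) ^ 2) / 2)) := by
    intro w
    rw [hFdef]
    simp only
    rw [show (∏ i, gaussianPDF 0 1 (w i))
        = ENNReal.ofReal (∏ i, gaussianPDFReal 0 1 (w i)) from
      (ENNReal.ofReal_prod_of_nonneg fun i _ => gaussianPDFReal_nonneg 0 1 (w i)).symm]
    congr 1
    have hg : ∀ t : ℝ, gaussianPDFReal 0 1 t
        = (Real.sqrt (2 * π))⁻¹ * Real.exp (-(t ^ 2) / 2) := by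
      intro t
      simp [gaussianPDFReal, mul_one, sub_zero]
    simp_rw [hg]
    rw [Finset.prod_mul_distrib, Finset.prod_const, Finset.card_univ, Fintype.card_fin,
      ← Real.exp_sum]
    congr 1
    rw [← Finset.sum_div, ← Finset.sum_neg_distrib]
  have hFO : F ∘ T = F := by
    funext x
    have hOx : (O *ᵥ x) ⬝ᵥ (O *ᵥ x) = x ⬝ᵥ x := by
      rw [Matrix.dotProduct_mulVec]
      congr 1
      rw [← Matrix.transpose_transpose O, Matrix.vecMul_transpose, Matrix.transpose_transpose,
        Matrix.mulVec_mulVec, hOTO, Matrix.one_mulVec]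
    have hsum : ∑ i, ((O *ᵥ x) i) ^ 2 = ∑ i, (x i) ^ 2 := by
      simpa [dotProduct, pow_two] using hOx
    show F (T x) = F x
    rw [key (T x), key x]
    rw [show ∑ i, (T x i) ^ 2 = ∑ i, (x i) ^ 2 from hsum]
  have h1 : O.det * O.det = 1 := by
    have h := congrArg Matrix.det hO
    rwa [Matrix.det_mul, Matrix.det_transpose, Matrix.det_one] at h
  have hdet0 : LinearMap.det (Matrix.toLin' O) ≠ 0 := by
    rw [LinearMap.det_toLin']
    intro h0
    rw [h0, mul_zero] at h1
    exact zero_ne_one h1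
  have hvol : Measure.map T (volume : Measure (Fin k → ℝ)) = volume := by
    have hmap := Real.map_linearMap_volume_pi_eq_smul_volume_pi hdet0
    have habs : |(LinearMap.det (Matrix.toLin' O))⁻¹| = 1 := by
      rw [LinearMap.det_toLin', abs_inv]
      rcases mul_self_eq_one_iff.mp h1 with h | h <;> rw [h] <;> norm_num
    rw [habs] at hmap
    have hcoe : ⇑(Matrix.toLin' O) = T := by
      funext x
      exact Matrix.toLin'_apply O x
    rw [hcoe] at hmap
    simpa using hmap
  calc Measure.map T (Measure.pi fun _ : Fin k => gaussianReal 0 1)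
      = Measure.map T (volume.withDensity (F ∘ T)) := by
        rw [polyAux_pi_gaussian_eq k, hFO]
    _ = (Measure.map T volume).withDensity F := polyAux_map_withDensity T hT volume F hFmeas
    _ = volume.withDensity F := by rw [hvol]
    _ = _ := (polyAux_pi_gaussian_eq k).symm

/-- The joint law of i.i.d. standard normals is the Gaussian product measure. -/
lemma polyAux_map_joint {k : ℕ} {Ω : Type*} [MeasurableSpace Ω] (P : Measure Ω)
    [IsProbabilityMeasure P]
    (g : Fin k → Ω → ℝ) (hmeas : ∀ i, Measurable (g i))
    (hindep : iIndepFun g P)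
    (hlaw : ∀ i, Measure.map (g i) P = gaussianReal 0 1) :
    Measure.map (fun ω i => g i ω) P = Measure.pi fun _ : Fin k => gaussianReal 0 1 := by
  refine (Measure.pi_eq fun s hs => ?_).symm
  rw [Measure.map_apply (measurable_pi_lambda _ hmeas) (MeasurableSet.univ_pi hs)]
  have hpre : (fun ω i => g i ω) ⁻¹' Set.pi Set.univ s = ⋂ i, g i ⁻¹' s i := by
    ext ω
    simp [Set.mem_pi]
  rw [hpre, hindep.meas_iInter fun i => ⟨s i, hs i, rfl⟩]
  exact Finset.prod_congr rfl fun i _ => by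
    rw [← hlaw i, Measure.map_apply (hmeas i) (hs i)]

/-- If the joint law is a product measure, the coordinates are independent. -/
lemma polyAux_iIndepFun_of_map_pi {k : ℕ} {Ω : Type*} [MeasurableSpace Ω] (P : Measure Ω)
    [IsProbabilityMeasure P]
    (h : Fin k → Ω → ℝ) (hmeas : ∀ i, Measurable (h i))
    (ν : Fin k → Measure ℝ) [∀ i, IsProbabilityMeasure (ν i)]
    (hmap : Measure.map (fun ω i => h i ω) P = Measure.pi ν) :
    iIndepFun h P := by
  classical
  have key : ∀ (s : Finset (Fin k)) (A : Fin k → Set ℝ), (∀ i ∈ s, MeasurableSet (A i)) →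
      P (⋂ i ∈ s, h i ⁻¹' A i) = ∏ i ∈ s, ν i (A i) := by
    intro s A hA
    set A' : Fin k → Set ℝ := fun j => if j ∈ s then A j else Set.univ with hA'def
    have hA' : ∀ j, MeasurableSet (A' j) := by
      intro j
      by_cases hj : j ∈ s
      · simpa [hA'def, hj] using hA j hj
      · simp [hA'def, hj]
    have hpre : (⋂ i ∈ s, h i ⁻¹' A i) = (fun ω j => h j ω) ⁻¹' Set.pi Set.univ A' := by
      ext ω
      simp only [Set.mem_iInter, Set.mem_preimage, Set.mem_pi, Set.mem_univ, true_implies]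
      constructor
      · intro hω j
        by_cases hj : j ∈ s
        · simpa [hA'def, hj] using hω j hj
        · simp [hA'def, hj]
      · intro hω j hj
        have := hω j
        simpa [hA'def, hj] using this
    rw [hpre, ← Measure.map_apply (measurable_pi_lambda _ hmeas) (MeasurableSet.univ_pi hA'),
      hmap, Measure.pi_pi]
    calc ∏ j, ν j (A' j) = ∏ j, (if j ∈ s then ν j (A j) else 1) := by
          refine Finset.prod_congr rfl fun j _ => ?_
          by_cases hj : j ∈ s <;> simp [hA'def, hj]
      _ = ∏ j ∈ s, ν j (A j) := by
          rw [Finset.prod_ite_mem, Finset.univ_inter]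
  rw [iIndepFun_iff_measure_inter_preimage_eq_mul]
  intro s A hA
  rw [key s A hA]
  refine Finset.prod_congr rfl fun i hi => ?_
  have h2 := key {i} A (by simpa using hA i hi)
  simp only [Finset.set_biInter_singleton, Finset.prod_singleton] at h2
  exact h2.symm

end Aux

/-- **Polyhedral lemma, independence part.** Let `y = μ + B g` be an `n`-dimensional
Gaussian vector `N(μ, Σ)` with `Σ = B Bᵀ` positive definite (`g` a vector of i.i.d.
standard normals). With `c = Ση (ηᵀΣη)⁻¹` and `z = (I − cηᵀ) y`, the random variables
`ηᵀy` and `z` are independent. -/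
theorem polyhedral_lemma_independence
    {n : ℕ} {Ω : Type*} [MeasurableSpace Ω] (P : Measure Ω) [IsProbabilityMeasure P]
    (g : Fin n → Ω → ℝ) (hg_meas : ∀ i, Measurable (g i))
    (hg_indep : iIndepFun g P)
    (hg_law : ∀ i, Measure.map (g i) P = gaussianReal 0 1)
    (μ : Fin n → ℝ) (B S : Matrix (Fin n) (Fin n) ℝ)
    (hS : S = B * Bᵀ) (hSpd : S.PosDef)
    (y : Ω → Fin n → ℝ) (hy : ∀ ω, y ω = μ + B *ᵥ (fun i => g i ω))
    (η : Fin n → ℝ) (hη : η ≠ 0)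
    (c : Fin n → ℝ) (hc : c = (η ⬝ᵥ S *ᵥ η)⁻¹ • (S *ᵥ η)) :
    IndepFun (fun ω => η ⬝ᵥ y ω) (fun ω => (1 - vecMulVec c η) *ᵥ y ω) P := by
  classical
  cases n with
  | zero => exact absurd (funext fun i => i.elim0) hη
  | succ m =>
    -- positivity of the quadratic form
    have hpos : 0 < η ⬝ᵥ (S *ᵥ η) := by simpa using hSpd.dotProduct_mulVec_pos hη
    -- the vector `v = Bᵀ η` and its norm
    have hvv : (Bᵀ *ᵥ η) ⬝ᵥ (Bᵀ *ᵥ η) = η ⬝ᵥ (S *ᵥ η) := by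
      rw [Matrix.dotProduct_mulVec (Bᵀ *ᵥ η) Bᵀ η, Matrix.vecMul_transpose,
        Matrix.mulVec_mulVec, ← hS]
      exact dotProduct_comm _ _
    set v : Fin (m + 1) → ℝ := Bᵀ *ᵥ η with hvdef
    have hvvpos : 0 < v ⬝ᵥ v := by rw [hvdef, hvv]; exact hpos
    set r : ℝ := Real.sqrt (v ⬝ᵥ v) with hrdef
    have hrpos : 0 < r := Real.sqrt_pos.mpr hvvpos
    have hr2 : r * r = v ⬝ᵥ v := Real.mul_self_sqrt hvvpos.le
    -- the unit vector `u = v / r` in Euclidean space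
    set u : EuclideanSpace ℝ (Fin (m + 1)) := WithLp.toLp 2 (fun i => r⁻¹ * v i) with hudef
    have huu : (inner ℝ u u : ℝ) = 1 := by
      rw [PiLp.inner_apply]
      simp only [RCLike.inner_apply, conj_trivial, hudef]
      calc ∑ i, (r⁻¹ * v i) * (r⁻¹ * v i) = r⁻¹ * r⁻¹ * ∑ i, v i * v i := by
            rw [Finset.mul_sum]
            exact Finset.sum_congr rfl fun i _ => by ring
        _ = (r * r)⁻¹ * (v ⬝ᵥ v) := by rw [mul_inv]; rfl
        _ = 1 := by rw [hr2]; exact inv_mul_cancel₀ hvvpos.ne'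
    have hunorm : ‖u‖ = 1 := by
      have h2 : ‖u‖ * ‖u‖ = 1 := by rw [← real_inner_self_eq_norm_mul_norm]; exact huu
      rcases mul_self_eq_one_iff.mp h2 with h | h
      · exact h
      · linarith [norm_nonneg u]
    -- extend to an orthonormal basis
    have horth : Orthonormal ℝ (Set.restrict {(0 : Fin (m + 1))} fun _ => u) := by
      constructor
      · intro i
        exact hunorm
      · intro i j hij
        exact absurd (Subtype.ext ((Set.mem_singleton_iff.mp i.2).trans
          (Set.mem_singleton_iff.mp j.2).symm)) hij
    obtain ⟨b, hb⟩ := horth.exists_orthonormalBasis_extension_of_card_eq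
      (by simp) (v := fun _ => u)
    have hb0 : b 0 = u := hb 0 rfl
    have hb0' : ∀ j, b 0 j = r⁻¹ * v j := by
      intro j
      rw [hb0]
    -- the orthogonal matrix with rows `b i`
    set O : Matrix (Fin (m + 1)) (Fin (m + 1)) ℝ := Matrix.of fun i j => b i j with hOdef
    have hOrow : ∀ i j, O i j = b i j := fun i j => rfl
    have hOOT : O * Oᵀ = 1 := by
      ext i j
      rw [Matrix.mul_apply]
      have hij := (orthonormal_iff_ite.mp b.orthonormal) i j
      rw [PiLp.inner_apply] at hij
      simp only [RCLike.inner_apply, conj_trivial] at hij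
      simpa [Matrix.transpose_apply, Matrix.one_apply, hOrow, mul_comm] using hij
    have hOTO : Oᵀ * O = 1 := mul_eq_one_comm.mp hOOT
    -- the random vector of i.i.d. normals and its rotation
    set G : Ω → Fin (m + 1) → ℝ := fun ω i => g i ω with hGdef
    have hGmeas : Measurable G := measurable_pi_lambda _ hg_meas
    have hTmeas : Measurable (fun x : Fin (m + 1) → ℝ => O *ᵥ x) := by
      have hTalt : (fun x : Fin (m + 1) → ℝ => O *ᵥ x)
          = fun x => fun i => ∑ j, O i j * x j := by
        funext x i
        simp [Matrix.mulVec, dotProduct]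
      rw [hTalt]
      exact measurable_pi_lambda _ fun i =>
        Finset.measurable_sum _ fun j _ => (measurable_pi_apply j).const_mul _
    set h : Fin (m + 1) → Ω → ℝ := fun j ω => (O *ᵥ G ω) j with hhdef
    have hhmeas : ∀ j, Measurable (h j) := fun j =>
      (measurable_pi_apply j).comp (hTmeas.comp hGmeas)
    have hmapH : Measure.map (fun ω j => h j ω) P
        = Measure.pi fun _ : Fin (m + 1) => gaussianReal 0 1 := by
      have hcomp : (fun ω j => h j ω) = (fun x => O *ᵥ x) ∘ G := rfl
      rw [hcomp, ← Measure.map_map hTmeas hGmeas,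
        polyAux_map_joint P g hg_meas hg_indep hg_law,
        polyAux_map_mulVec_pi_gaussian O hOOT]
    have hindep : iIndepFun h P :=
      polyAux_iIndepFun_of_map_pi P h hhmeas (fun _ => gaussianReal 0 1) hmapH
    -- independence of the block `{0}` and its complement
    have indep0 := hindep.indepFun_finset {(0 : Fin (m + 1))} {(0 : Fin (m + 1))}ᶜ
      disjoint_compl_right hhmeas
    -- matrices
    set M : Matrix (Fin (m + 1)) (Fin (m + 1)) ℝ := (1 - vecMulVec c η) * B with hMdef
    set N : Matrix (Fin (m + 1)) (Fin (m + 1)) ℝ := M * Oᵀ with hNdef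
    have hMv : M *ᵥ v = 0 := by
      have hBv : B *ᵥ v = S *ᵥ η := by rw [hvdef, Matrix.mulVec_mulVec, ← hS]
      rw [hMdef, ← Matrix.mulVec_mulVec, hBv, Matrix.sub_mulVec, Matrix.one_mulVec]
      funext k
      have hk : (vecMulVec c η *ᵥ (S *ᵥ η)) k = c k * (η ⬝ᵥ (S *ᵥ η)) := by
        simp [Matrix.vecMulVec_apply, Matrix.mulVec, dotProduct, Finset.mul_sum,
          mul_assoc]
      have hck : c k * (η ⬝ᵥ (S *ᵥ η)) = (S *ᵥ η) k := by
        rw [hc]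
        simp only [Pi.smul_apply, smul_eq_mul]
        rw [mul_comm ((η ⬝ᵥ S *ᵥ η)⁻¹) _, mul_assoc, inv_mul_cancel₀ hpos.ne', mul_one]
      simp only [Pi.sub_apply, Pi.zero_apply]
      rw [hk, hck, sub_self]
    have hNcol : ∀ k, N k 0 = 0 := by
      intro k
      have : N k 0 = ∑ l, M k l * (r⁻¹ * v l) := by
        rw [hNdef, Matrix.mul_apply]
        refine Finset.sum_congr rfl fun l _ => ?_
        rw [Matrix.transpose_apply, hOrow, hb0']
      rw [this]
      have hMvk : ∑ l, M k l * v l = 0 := by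
        have := congrFun hMv k
        simpa [Matrix.mulVec, dotProduct] using this
      calc ∑ l, M k l * (r⁻¹ * v l) = r⁻¹ * ∑ l, M k l * v l := by
            rw [Finset.mul_sum]
            exact Finset.sum_congr rfl fun l _ => by ring
        _ = 0 := by rw [hMvk, mul_zero]
    -- the two factor maps
    set φ₁ : (({(0 : Fin (m + 1))} : Finset (Fin (m + 1))) → ℝ) → ℝ :=
      fun w => η ⬝ᵥ μ + r * w ⟨0, Finset.mem_singleton_self 0⟩ with hφ₁def
    have hφ₁meas : Measurable φ₁ :=
      by rw [hφ₁def]; fun_prop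
    set ext0 : ((({(0 : Fin (m + 1))}ᶜ : Finset (Fin (m + 1)))) → ℝ) → (Fin (m + 1) → ℝ) :=
      fun w j => if hj : j ∈ ({(0 : Fin (m + 1))}ᶜ : Finset (Fin (m + 1))) then w ⟨j, hj⟩ else 0
      with hext0def
    have hext0meas : Measurable ext0 := by
      refine measurable_pi_lambda _ fun j => ?_
      by_cases hj : j ∈ ({(0 : Fin (m + 1))}ᶜ : Finset (Fin (m + 1)))
      · simp only [hext0def, dif_pos hj]
        exact measurable_pi_apply _
      · simp only [hext0def, dif_neg hj]
        exact measurable_const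
    set φ₂ : ((({(0 : Fin (m + 1))}ᶜ : Finset (Fin (m + 1)))) → ℝ) → (Fin (m + 1) → ℝ) :=
      fun w => (1 - vecMulVec c η) *ᵥ μ + N *ᵥ ext0 w with hφ₂def
    have hφ₂meas : Measurable φ₂ := by
      have : φ₂ = fun w => (1 - vecMulVec c η) *ᵥ μ + (fun x : Fin (m+1) → ℝ => N *ᵥ x) (ext0 w) := rfl
      rw [this]
      have hNmeas : Measurable (fun x : Fin (m + 1) → ℝ => N *ᵥ x) := by
        have hTalt : (fun x : Fin (m + 1) → ℝ => N *ᵥ x)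
            = fun x => fun i => ∑ j, N i j * x j := by
          funext x i
          simp [Matrix.mulVec, dotProduct]
        rw [hTalt]
        exact measurable_pi_lambda _ fun i =>
          Finset.measurable_sum _ fun j _ => (measurable_pi_apply j).const_mul _
      exact measurable_const.add (hNmeas.comp hext0meas)
    -- identify the two random variables with compositions
    have e1 : (fun ω => η ⬝ᵥ y ω)
        = φ₁ ∘ (fun ω (i : ({(0 : Fin (m + 1))} : Finset (Fin (m + 1)))) => h i ω) := by
      funext ω
      have hy' : y ω = μ + B *ᵥ G ω := hy ω
      have hh0 : h 0 ω = ∑ j, (r⁻¹ * v j) * G ω j := by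
        show (O *ᵥ G ω) 0 = _
        simp only [Matrix.mulVec, dotProduct]
        exact Finset.sum_congr rfl fun j _ => by rw [hOrow 0 j, hb0' j]
      show η ⬝ᵥ y ω = η ⬝ᵥ μ + r * h 0 ω
      rw [hy', dotProduct_add]
      congr 1
      rw [Matrix.dotProduct_mulVec, ← Matrix.mulVec_transpose, ← hvdef, hh0, Finset.mul_sum]
      exact Finset.sum_congr rfl fun j _ => by
        field_simp
    have e2 : (fun ω => (1 - vecMulVec c η) *ᵥ y ω)
        = φ₂ ∘ (fun ω (i : (({(0 : Fin (m + 1))}ᶜ : Finset (Fin (m + 1))))) => h i ω) := by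
      funext ω
      show (1 - vecMulVec c η) *ᵥ y ω
        = (1 - vecMulVec c η) *ᵥ μ + N *ᵥ ext0 (fun i => h i ω)
      have hy' : y ω = μ + B *ᵥ G ω := hy ω
      rw [hy', Matrix.mulVec_add]
      congr 1
      have hsplit : (fun j => h j ω)
          = ext0 (fun i => h i ω) + Pi.single (0 : Fin (m + 1)) (h 0 ω) := by
        funext j
        by_cases hj : j = 0
        · subst hj
          simp [hext0def, Pi.single_eq_same]
        · have hj' : j ∈ ({(0 : Fin (m + 1))}ᶜ : Finset (Fin (m + 1))) := by
            simpa [Finset.mem_compl] using hj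
          simp [hext0def, hj', hj, Pi.single_eq_of_ne hj]
      have hNh : N *ᵥ (fun j => h j ω) = N *ᵥ ext0 (fun i => h i ω) := by
        rw [hsplit, Matrix.mulVec_add]
        have : N *ᵥ Pi.single (0 : Fin (m + 1)) (h 0 ω) = 0 := by
          rw [Matrix.mulVec_single]
          funext k
          simp [hNcol k]
        rw [this, add_zero]
      rw [← hNh]
      have hhO : (fun j => h j ω) = O *ᵥ G ω := rfl
      have hNO : N * O = M := by
        rw [hNdef, Matrix.mul_assoc, hOTO, Matrix.mul_one]
      rw [hhO, Matrix.mulVec_mulVec, Matrix.mulVec_mulVec, hNO, ← hMdef]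
    rw [e1, e2]
    exact indep0.comp hφ₁meas hφ₂meas
end
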